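/- Let p ≥ 1 and let (X, d, m) be a metric measure space whose measure m is β-doubling for some β > 1, and set N = log β / log 2. Assume a ≤ θ_N^−(x) ≤ θ_N^+(x) ≤ b for all x ∈ X, for some constants b > a > 0. Let u : X → ℝ be a Lipschitz function with bounded support such that Lip u(x) = lip u(x) for m-almost every x ∈ X. Then C₁ ∫_X (Lip u(x))^p dm(x) ≤ liminf_{λ→+∞} λ^p · (m × m)(E_{λ,u}) and limsup_{λ→+∞} λ^p · (m × m)(E_{λ,u}) ≤ C₂ ∫_X (Lip u(x))^p dm(x), where C₁ = a / (2^{5N} · 8^p), C₂ = 2b, and E_{λ,u} = {(x,y) ∈ X × X : x ≠ y, |u(x) − u(y)| ≥ λ · d(x,y)^{N/p + 1}}. -/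

import Mathlib

/-!
By Tonelli, `λ ^ p (μ × μ) E_λ = ∫ λ ^ p μ (E_λ x) dμ(x)`, where `E_λ x` is the section of `E_λ`
at `x`, so both bounds reduce to pointwise statements about `λ ^ p μ (E_λ x)` as `λ → ∞`, integrated
with Fatou's lemma (in its reverse form for the upper bound, dominated by `b (K + 1) ^ p` on the
`1`-neighbourhood of the support of the `K`-Lipschitz function `u`).

Upper bound: since `2 ^ N = β`, doubling makes `μ (B_r x) / r ^ N` non-decreasing as `r` is halved,
so the upper density gives `μ (B_r x) ≤ b r ^ N` at every scale. If `Lip u x < c`, then `E_λ x` lies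
in the ball of radius `ρ` with `λ ρ ^ (N / p) = c` for large `λ`, so `λ ^ p μ (E_λ x) ≤ b c ^ p`.

Lower bound: at a point with `Lip u x = lip u x = g > 0`, for small `ρ` there is `y ∈ B_{3ρ} x`
with `|u y - u x| > 7/8 g (3ρ)`. By Lebesgue's density theorem, applied to the closed sets of points
where `u` has slope at most a rational `c ∈ (g, 9/8 g)` below a fixed scale (one of which contains
`x`), two thirds of `B_ρ y` consists of such points, and all of them lie in `E_λ x` when
`λ (4ρ) ^ (N / p) = 3/8 g`. The lower density and doubling give `μ (B_ρ y) ≥ a ρ ^ N / (2 β ^ 2)`,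
which yields the constant `a / (2 ^ (5N) 8 ^ p)` with room to spare.
-/

open MeasureTheory Filter Metric Set Topology

/-- The lower pointwise Lipschitz constant
`lip u (x) = liminf_{r → 0+} sup_{y ∈ B_r(x)} |u y - u x| / r`. -/
noncomputable def lipLower {X : Type*} [MetricSpace X] (u : X → ℝ) (x : X) : ℝ :=
  Filter.liminf (fun r : ℝ => ⨆ y ∈ Metric.ball x r, |u y - u x| / r) (𝓝[>] (0 : ℝ))

/-- The upper pointwise Lipschitz constant
`Lip u (x) = limsup_{r → 0+} sup_{y ∈ B_r(x)} |u y - u x| / r`. -/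
noncomputable def lipUpper {X : Type*} [MetricSpace X] (u : X → ℝ) (x : X) : ℝ :=
  Filter.limsup (fun r : ℝ => ⨆ y ∈ Metric.ball x r, |u y - u x| / r) (𝓝[>] (0 : ℝ))

/-- The set `E_{λ,u} = {(x,y) : x ≠ y, |u x - u y| ≥ λ d(x,y)^{N/p+1}}`. -/
def BVYset {X : Type*} [MetricSpace X] (u : X → ℝ) (N p lam : ℝ) : Set (X × X) :=
  {q : X × X | q.1 ≠ q.2 ∧ lam * dist q.1 q.2 ^ (N / p + 1) ≤ |u q.1 - u q.2|}

open scoped ENNReal NNReal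

section PointwiseLipschitz

variable {X : Type*} [MetricSpace X] {u : X → ℝ} {K : ℝ≥0} {x : X} {r c : ℝ}

/-- `lipUpper u x` and `lipLower u x` are the `limsup` and `liminf` of `ballSlope u x r` as
`r → 0+`. -/
noncomputable def ballSlope (u : X → ℝ) (x : X) (r : ℝ) : ℝ :=
  ⨆ y ∈ ball x r, |u y - u x| / r

lemma LipschitzWith.abs_sub_le (hu : LipschitzWith K u) (y z : X) :
    |u y - u z| ≤ K * dist y z := by
  simpa [Real.dist_eq] using hu.dist_le_mul y z

lemma ballSlope_nonneg (r : ℝ) : 0 ≤ ballSlope u x r :=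
  Real.iSup_nonneg fun _ => Real.iSup_nonneg fun hy =>
    div_nonneg (abs_nonneg _) (dist_nonneg.trans (mem_ball.1 hy).le)

lemma LipschitzWith.div_le_of_mem_ball (hu : LipschitzWith K u) (hr : 0 < r) {y : X}
    (hy : y ∈ ball x r) :
    |u y - u x| / r ≤ K :=
  (div_le_iff₀ hr).2 <| (hu.abs_sub_le y x).trans (by gcongr; exact (mem_ball.1 hy).le)

lemma ballSlope_le (hu : LipschitzWith K u) (hr : 0 < r) : ballSlope u x r ≤ K :=
  Real.iSup_le (fun _ => Real.iSup_le (hu.div_le_of_mem_ball hr) K.2) K.2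

lemma div_le_ballSlope (hu : LipschitzWith K u) (hr : 0 < r) {y : X} (hy : y ∈ ball x r) :
    |u y - u x| / r ≤ ballSlope u x r := by
  have hbdd : BddAbove (range fun y => ⨆ _ : y ∈ ball x r, |u y - u x| / r) :=
    ⟨K, forall_mem_range.2 fun _ => Real.iSup_le (hu.div_le_of_mem_ball hr) K.2⟩
  have := le_ciSup hbdd y
  rwa [ciSup_pos hy] at this

lemma isBoundedUnder_le_ballSlope (hu : LipschitzWith K u) :
    IsBoundedUnder (· ≤ ·) (𝓝[>] 0) (ballSlope u x) :=
  isBoundedUnder_of_eventually_le (a := (K : ℝ))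
    (eventually_mem_nhdsWithin.mono fun _ hr => ballSlope_le hu hr)

lemma isBoundedUnder_ge_ballSlope : IsBoundedUnder (· ≥ ·) (𝓝[>] 0) (ballSlope u x) :=
  isBoundedUnder_of_eventually_ge (a := 0) (Eventually.of_forall ballSlope_nonneg)

lemma lipUpper_nonneg (hu : LipschitzWith K u) : 0 ≤ lipUpper u x :=
  le_limsup_of_frequently_le (Frequently.of_forall ballSlope_nonneg)
    (isBoundedUnder_le_ballSlope hu)

lemma exists_abs_sub_le_of_lipUpper_lt (hu : LipschitzWith K u) (hc : lipUpper u x < c) :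
    ∃ r₀ > 0, ∀ y, dist y x < r₀ → |u y - u x| ≤ c * dist y x := by
  obtain ⟨r₀, hr₀, hslope⟩ := (nhdsGT_basis (0 : ℝ)).eventually_iff.1
    (eventually_lt_of_limsup_lt hc (isBoundedUnder_le_ballSlope hu))
  refine ⟨r₀, hr₀, fun y hy => ?_⟩
  -- `|u y - u x| < c * r` for every radius `r` strictly between `dist y x` and `r₀`
  refine ge_of_tendsto (((continuous_const_mul c).tendsto (dist y x)).mono_left
    (nhdsWithin_le_nhds (s := Ioi (dist y x)))) ?_
  filter_upwards [Ioo_mem_nhdsGT hy] with r hr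
  have hr0 : 0 < r := dist_nonneg.trans_lt hr.1
  exact ((div_lt_iff₀ hr0).1 <| (div_le_ballSlope hu hr0 (mem_ball.2 hr.1)).trans_lt
    (hslope ⟨hr0, hr.2⟩)).le

lemma eventually_exists_lt_abs_sub_of_lt_lipLower (hc₀ : 0 ≤ c) (hc : c < lipLower u x) :
    ∀ᶠ r in 𝓝[>] 0, ∃ y ∈ ball x r, c * r < |u y - u x| := by
  have : Nonempty X := ⟨x⟩
  filter_upwards [eventually_lt_of_lt_liminf hc isBoundedUnder_ge_ballSlope,
    eventually_mem_nhdsWithin] with r hr (hr0 : 0 < r)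
  obtain ⟨y, hy⟩ := exists_lt_of_lt_ciSup hr
  by_cases hyx : y ∈ ball x r
  · rw [ciSup_pos hyx, lt_div_iff₀ hr0] at hy
    exact ⟨y, hyx, hy⟩
  · simp [hyx] at hy
    linarith

end PointwiseLipschitz

section SlopeLeSet

variable {X : Type*} [MetricSpace X] {u : X → ℝ} {K : ℝ≥0} {x : X} {c : ℝ}

def slopeLeSet (u : X → ℝ) (c δ : ℝ) : Set X :=
  {y | ∀ z, dist y z < δ → |u y - u z| ≤ c * dist y z}

lemma isClosed_slopeLeSet (hu : Continuous u) (c δ : ℝ) : IsClosed (slopeLeSet u c δ) := by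
  have : slopeLeSet u c δ = ⋂ z, {y | δ ≤ dist y z} ∪ {y | |u y - u z| ≤ c * dist y z} := by
    ext y
    simp [slopeLeSet, imp_iff_not_or]
  rw [this]
  exact isClosed_iInter fun z => (isClosed_le continuous_const (by fun_prop)).union
    (isClosed_le (by fun_prop) (by fun_prop))

lemma exists_nat_mem_slopeLeSet (hu : LipschitzWith K u) (hc : lipUpper u x < c) :
    ∃ m : ℕ, x ∈ slopeLeSet u c (1 / (m + 1)) := by
  obtain ⟨r₀, hr₀, hslope⟩ := exists_abs_sub_le_of_lipUpper_lt hu hc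
  obtain ⟨m, hm⟩ := exists_nat_one_div_lt hr₀
  refine ⟨m, fun z hz => ?_⟩
  rw [dist_comm] at hz ⊢
  rw [abs_sub_comm]
  exact hslope z (hz.trans hm)

end SlopeLeSet

section Doubling

variable {X : Type*} [MetricSpace X] [MeasurableSpace X] {μ : Measure X} {β : ℝ}

def IsDoublingWith (μ : Measure X) (β : ℝ) : Prop :=
  ∀ (x : X) (r : ℝ), 0 < r → μ (ball x (2 * r)) ≤ ENNReal.ofReal β * μ (ball x r)

lemma IsDoublingWith.measure_ball_two_pow_mul_le (h : IsDoublingWith μ β) (x : X) {r : ℝ}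
    (hr : 0 < r) (k : ℕ) :
    μ (ball x (2 ^ k * r)) ≤ ENNReal.ofReal β ^ k * μ (ball x r) := by
  induction k with
  | zero => simp
  | succ k ih =>
    calc μ (ball x (2 ^ (k + 1) * r)) = μ (ball x (2 * (2 ^ k * r))) := by ring_nf
      _ ≤ ENNReal.ofReal β * μ (ball x (2 ^ k * r)) := h x _ (by positivity)
      _ ≤ ENNReal.ofReal β * (ENNReal.ofReal β ^ k * μ (ball x r)) := by gcongr
      _ = ENNReal.ofReal β ^ (k + 1) * μ (ball x r) := by ring

lemma IsDoublingWith.measure_ball_le_of_dist_lt (h : IsDoublingWith μ β) {x y : X} {r : ℝ}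
    (hr : 0 < r) (hxy : dist y x < 3 * r) :
    μ (ball x r) ≤ ENNReal.ofReal β ^ 2 * μ (ball y r) := by
  refine (measure_mono fun z hz => ?_).trans (h.measure_ball_two_pow_mul_le y hr 2)
  rw [mem_ball] at hz ⊢
  linarith [dist_triangle z x y, dist_comm x y]

lemma IsDoublingWith.isUnifLocDoublingMeasure (h : IsDoublingWith μ β) :
    IsUnifLocDoublingMeasure μ := by
  refine ⟨⟨Real.toNNReal β ^ 2, eventually_mem_nhdsWithin.mono fun r (hr : 0 < r) x => ?_⟩⟩
  calc μ (closedBall x (2 * r)) ≤ μ (ball x (2 ^ 2 * r)) :=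
        measure_mono (closedBall_subset_ball (by linarith))
    _ ≤ ENNReal.ofReal β ^ 2 * μ (ball x r) := h.measure_ball_two_pow_mul_le x hr 2
    _ ≤ ↑(Real.toNNReal β ^ 2) * μ (closedBall x r) := by
      gcongr
      · simp [ENNReal.ofReal]
      · exact ball_subset_closedBall

lemma two_rpow_eq_of_eq_log_div_log {N : ℝ} (hβ : 0 < β) (hN : N = Real.log β / Real.log 2) :
    (2 : ℝ) ^ N = β := by
  rw [Real.rpow_def_of_pos two_pos, hN, mul_div_cancel₀ _ (Real.log_pos one_lt_two).ne',
    Real.exp_log hβ]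

lemma IsDoublingWith.measure_ball_div_rpow_le {N : ℝ} (h : IsDoublingWith μ β)
    (hβN : (2 : ℝ) ^ N = β) (x : X) {r : ℝ} (hr : 0 < r) (k : ℕ) :
    μ (ball x r) / ENNReal.ofReal (r ^ N) ≤
      μ (ball x (r / 2 ^ k)) / ENNReal.ofReal ((r / 2 ^ k) ^ N) := by
  have hβ : 0 < β := hβN ▸ Real.rpow_pos_of_pos two_pos N
  have hrk : 0 < r / 2 ^ k := by positivity
  have hpow : ENNReal.ofReal (r ^ N) = ENNReal.ofReal β ^ k * ENNReal.ofReal ((r / 2 ^ k) ^ N) := by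
    have : r ^ N = β ^ k * (r / 2 ^ k) ^ N := by
      rw [← hβN, Real.rpow_pow_comm two_pos.le, ← Real.mul_rpow (by positivity) hrk.le,
        mul_div_cancel₀ _ (by positivity)]
    rw [this, ENNReal.ofReal_mul (by positivity), ENNReal.ofReal_pow hβ.le]
  have hball := h.measure_ball_two_pow_mul_le x hrk k
  rw [mul_div_cancel₀ _ (by positivity)] at hball
  calc μ (ball x r) / ENNReal.ofReal (r ^ N)
      ≤ ENNReal.ofReal β ^ k * μ (ball x (r / 2 ^ k)) /
          (ENNReal.ofReal β ^ k * ENNReal.ofReal ((r / 2 ^ k) ^ N)) := by rw [← hpow]; gcongr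
    _ = μ (ball x (r / 2 ^ k)) / ENNReal.ofReal ((r / 2 ^ k) ^ N) :=
        ENNReal.mul_div_mul_left _ _ (by simp [hβ]) (by simp)

lemma IsDoublingWith.measure_ball_le {N b : ℝ} (h : IsDoublingWith μ β) (hβN : (2 : ℝ) ^ N = β)
    {x : X} (hθ : limsup (fun r => μ (ball x r) / ENNReal.ofReal (r ^ N)) (𝓝[>] 0) ≤
      ENNReal.ofReal b) {r : ℝ} (hr : 0 < r) :
    μ (ball x r) ≤ ENNReal.ofReal b * ENNReal.ofReal (r ^ N) := by
  set G : ℝ → ℝ≥0∞ := fun r => μ (ball x r) / ENNReal.ofReal (r ^ N)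
  have htends : Tendsto (fun k : ℕ => r / 2 ^ k) atTop (𝓝[>] 0) :=
    tendsto_nhdsWithin_of_tendsto_nhds_of_eventually_within _
      (by simpa [div_eq_mul_inv] using (tendsto_pow_atTop_nhds_zero_of_lt_one
        (by norm_num : (0 : ℝ) ≤ 1 / 2) (by norm_num)).const_mul r)
      (Eventually.of_forall fun k => by simp only [mem_Ioi]; positivity)
  have hGr : G r ≤ ENNReal.ofReal b :=
    calc G r ≤ limsup (G ∘ fun k : ℕ => r / 2 ^ k) atTop :=
          le_limsup_of_frequently_le
            (Frequently.of_forall (h.measure_ball_div_rpow_le hβN x hr))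
      _ ≤ limsup G (𝓝[>] 0) := htends.limsup_comp_le_limsup
      _ ≤ ENNReal.ofReal b := hθ
  rwa [ENNReal.div_le_iff_le_mul (Or.inl (by simp; positivity)) (Or.inl (by simp))] at hGr

lemma measure_lt_top_of_isBounded (hball : ∀ x r, 0 < r → μ (ball x r) < ∞) {s : Set X}
    (hs : Bornology.IsBounded s) : μ s < ∞ := by
  rcases s.eq_empty_or_nonempty with rfl | ⟨x, -⟩
  · simp
  obtain ⟨r, hr, hsub⟩ := hs.subset_ball_lt 0 x
  exact (measure_mono hsub).trans_lt (hball x r hr)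

lemma IsDoublingWith.two_mul_measure_ball_le (h : IsDoublingWith μ β) (hβ : 0 < β)
    {S : Set X} (hS : MeasurableSet S) {y : X} {r : ℝ} (hr : 0 < r) (hfin : μ (ball y r) ≠ ∞)
    (hdens : μ (closedBall y r \ S) ≤ (3 * ENNReal.ofReal β)⁻¹ * μ (closedBall y r)) :
    2 * μ (ball y r) ≤ 3 * μ (ball y r ∩ S) := by
  have hclosed : μ (closedBall y r) ≤ ENNReal.ofReal β * μ (ball y r) :=
    (measure_mono (closedBall_subset_ball (by linarith))).trans (h y r hr)
  have hbad : 3 * μ (ball y r \ S) ≤ μ (ball y r) :=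
    calc 3 * μ (ball y r \ S) ≤ 3 * ((3 * ENNReal.ofReal β)⁻¹ * μ (closedBall y r)) := by
          gcongr
          exact (measure_mono (sdiff_subset_sdiff_left ball_subset_closedBall)).trans hdens
      _ ≤ 3 * ((3 * ENNReal.ofReal β)⁻¹ * (ENNReal.ofReal β * μ (ball y r))) := by gcongr
      _ = (3 * ENNReal.ofReal β) * (3 * ENNReal.ofReal β)⁻¹ * μ (ball y r) := by ring
      _ = μ (ball y r) := by
          rw [ENNReal.mul_inv_cancel (by simp [hβ]) (by finiteness), one_mul]
  refine ENNReal.le_of_add_le_add_right hfin ?_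
  calc 2 * μ (ball y r) + μ (ball y r) = 3 * (μ (ball y r ∩ S) + μ (ball y r \ S)) := by
        rw [measure_inter_add_sdiff _ hS]; ring
    _ ≤ 3 * μ (ball y r ∩ S) + μ (ball y r) := by rw [mul_add]; gcongr

end Doubling

section Density

variable {α : Type*} [PseudoMetricSpace α] [MeasurableSpace α] [SecondCountableTopology α]
  [BorelSpace α] (μ : Measure α) [IsLocallyFiniteMeasure μ] [IsUnifLocDoublingMeasure μ]

lemma IsUnifLocDoublingMeasure.ae_eventually_measure_closedBall_diff_le {S : Set α}
    (hS : MeasurableSet S) (K : ℝ) {ε : ℝ≥0∞} (hε : 0 < ε) (hε' : ε ≠ ∞) :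
    ∀ᵐ x ∂μ, x ∈ S → ∀ᶠ r in 𝓝[>] 0, ∀ w, x ∈ closedBall w (K * r) →
      μ (closedBall w r \ S) ≤ ε * μ (closedBall w r) := by
  filter_upwards [(vitaliFamily μ K).ae_tendsto_measure_inter_div_of_measurableSet hS.compl]
    with x hx hxS
  rw [indicator_of_notMem (not_not_intro hxS)] at hx
  obtain ⟨η, hη, hsmall⟩ :=
    (vitaliFamily μ K).eventually_filterAt_iff.1 (hx.eventually (gt_mem_nhds hε))
  have hscale : Tendsto (fun r => (K + 1) * r) (𝓝[>] 0) (𝓝 0) := by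
    simpa using ((continuous_const_mul (K + 1)).tendsto 0).mono_left nhdsWithin_le_nhds
  filter_upwards [hscale.eventually (gt_mem_nhds hη), eventually_mem_nhdsWithin]
    with r hrη (hr : 0 < r) w hxw
  have hsub : closedBall w r ⊆ closedBall x η := fun z hz => by
    rw [mem_closedBall] at hz hxw ⊢
    linarith [dist_triangle z w x, dist_comm x w]
  have hlt := hsmall _ (closedBall_mem_vitaliFamily_of_dist_le_mul μ
    (by rwa [mem_closedBall] at hxw) hr) hsub
  rw [sdiff_eq, inter_comm]
  exact (ENNReal.div_le_iff_le_mul (Or.inr hε') (Or.inr hε.ne')).1 hlt.le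

end Density

section Sections

variable {X : Type*} [MetricSpace X] {u : X → ℝ} {N p lam c : ℝ} {x y : X}

lemma mem_BVYset_iff_of_ne (hxy : x ≠ y) :
    (x, y) ∈ BVYset u N p lam ↔ lam * dist x y ^ (N / p) * dist x y ≤ |u x - u y| := by
  simp [BVYset, hxy, Real.rpow_add_one (dist_ne_zero.2 hxy), mul_assoc]

lemma dist_lt_of_mem_BVYset (hNp : 0 < N / p) (hlam : 0 < lam) (hxy : (x, y) ∈ BVYset u N p lam)
    (hslope : |u x - u y| ≤ c * dist x y) {c' : ℝ} (hc : c < c') :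
    dist x y < (c' / lam) ^ (p / N) := by
  have hne : x ≠ y := hxy.1
  have hd : 0 < dist x y := dist_pos.2 hne
  have hle : lam * dist x y ^ (N / p) ≤ c :=
    le_of_mul_le_mul_right (((mem_BVYset_iff_of_ne hne).1 hxy).trans hslope) hd
  have hpos : 0 < lam * dist x y ^ (N / p) := by positivity
  rw [← inv_div N p, Real.lt_rpow_inv_iff_of_pos hd.le (div_pos (by linarith) hlam).le hNp,
    lt_div_iff₀ hlam]
  linarith

lemma mem_BVYset_of_le (hNp : 0 ≤ N / p) (hlam : 0 ≤ lam) {R s : ℝ} (hR : dist x y ≤ R)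
    (hlamR : lam * R ^ (N / p) ≤ s) (hs : s * R < |u x - u y|) : (x, y) ∈ BVYset u N p lam := by
  have hR0 : 0 ≤ R := dist_nonneg.trans hR
  have hsR : 0 ≤ s * R := mul_nonneg ((by positivity : 0 ≤ lam * R ^ (N / p)).trans hlamR) hR0
  have hne : x ≠ y := by
    rintro rfl
    simp at hs
    linarith
  rw [mem_BVYset_iff_of_ne hne]
  calc lam * dist x y ^ (N / p) * dist x y ≤ lam * R ^ (N / p) * R := by
        have : 0 ≤ lam * R ^ (N / p) := by positivity
        gcongr
    _ ≤ s * R := by gcongr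
    _ ≤ |u x - u y| := hs.le

lemma ball_inter_slopeLeSet_subset_section {g ρ δ : ℝ} (hNp : 0 ≤ N / p)
    (hlam : 0 ≤ lam) (hc0 : 0 ≤ c) (hc : c ≤ 9 / 8 * g) (hρδ : ρ ≤ δ) (hy : dist y x < 3 * ρ)
    (hincr : 7 / 8 * g * (3 * ρ) < |u y - u x|) (hlamρ : lam * (4 * ρ) ^ (N / p) ≤ 3 / 8 * g) :
    ball y ρ ∩ slopeLeSet u c δ ⊆ Prod.mk x ⁻¹' BVYset u N p lam := by
  rintro z ⟨hz, hzS⟩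
  have hρ : 0 ≤ ρ := by linarith [dist_nonneg (x := y) (y := x)]
  rw [mem_ball] at hz
  have hzy : |u z - u y| ≤ 9 / 8 * g * ρ :=
    calc |u z - u y| ≤ c * dist z y := hzS y (hz.trans_le hρδ)
      _ ≤ 9 / 8 * g * ρ := mul_le_mul hc hz.le dist_nonneg (hc0.trans hc)
  refine mem_BVYset_of_le hNp hlam (R := 4 * ρ) ?_ hlamρ ?_
  · linarith [dist_triangle x y z, dist_comm x y, dist_comm y z]
  -- `|u x - u z| > 21 / 8 * g * ρ - 9 / 8 * g * ρ = 3 / 8 * g * (4 * ρ)`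
  · linarith [abs_sub_le (u y) (u z) (u x), abs_sub_comm (u x) (u z), abs_sub_comm (u y) (u z)]

end Sections

lemma tendsto_div_rpow_atTop_nhdsGT_zero {c e : ℝ} (hc : 0 < c) (he : 0 < e) :
    Tendsto (fun lam : ℝ => (c / lam) ^ e) atTop (𝓝[>] 0) := by
  refine tendsto_nhdsWithin_of_tendsto_nhds_of_eventually_within _ ?_ ?_
  · simpa [Real.zero_rpow he.ne'] using
      (tendsto_const_nhds.div_atTop tendsto_id).rpow_const (p := e) (Or.inr he.le)
  · filter_upwards [eventually_gt_atTop 0] with lam hlam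
    exact Real.rpow_pos_of_pos (div_pos hc hlam) e

lemma eventually_atTop_exists_mul_rpow_eq {s e : ℝ} (hs : 0 < s) (he : 0 < e) {P : ℝ → Prop}
    (hP : ∀ᶠ r in 𝓝[>] 0, P r) : ∀ᶠ lam in atTop, ∃ r > 0, lam * r ^ e = s ∧ P r := by
  filter_upwards [(tendsto_div_rpow_atTop_nhdsGT_zero hs (inv_pos.2 he)).eventually
    (hP.and self_mem_nhdsWithin), eventually_gt_atTop 0] with lam ⟨hPr, hr⟩ hlam
  refine ⟨_, hr, ?_, hPr⟩
  rw [Real.rpow_inv_rpow (div_pos hs hlam).le he.ne', mul_div_cancel₀ _ hlam.ne']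

section SectionMeasure

variable {X : Type*} [MetricSpace X] [MeasurableSpace X] {μ : Measure X} {u : X → ℝ} {K : ℝ≥0}
  {N p b lam c : ℝ} {x : X}

lemma rpow_mul_measure_ball_le
    (hball : ∀ r, 0 < r → μ (ball x r) ≤ ENNReal.ofReal b * ENNReal.ofReal (r ^ N))
    (hN : 0 < N) (hlam : 0 < lam) (hc : 0 < c) :
    ENNReal.ofReal (lam ^ p) * μ (ball x ((c / lam) ^ (p / N))) ≤
      ENNReal.ofReal b * ENNReal.ofReal (c ^ p) :=
  calc ENNReal.ofReal (lam ^ p) * μ (ball x ((c / lam) ^ (p / N)))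
      ≤ ENNReal.ofReal (lam ^ p) *
          (ENNReal.ofReal b * ENNReal.ofReal (((c / lam) ^ (p / N)) ^ N)) := by
        gcongr
        exact hball _ (by positivity)
    _ = ENNReal.ofReal b * ENNReal.ofReal (lam ^ p * ((c / lam) ^ (p / N)) ^ N) := by
        rw [ENNReal.ofReal_mul (by positivity)]
        ring
    _ = ENNReal.ofReal b * ENNReal.ofReal (c ^ p) := by
        rw [← Real.rpow_mul (by positivity), div_mul_cancel₀ p hN.ne', Real.div_rpow hc.le hlam.le,
          mul_div_cancel₀ _ (by positivity)]

lemma eventually_rpow_mul_measure_section_le (hu : LipschitzWith K u)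
    (hball : ∀ r, 0 < r → μ (ball x r) ≤ ENNReal.ofReal b * ENNReal.ofReal (r ^ N))
    (hN : 0 < N) (hp : 0 < p) (hc : lipUpper u x < c) :
    ∀ᶠ lam in atTop, ENNReal.ofReal (lam ^ p) * μ (Prod.mk x ⁻¹' BVYset u N p lam) ≤
      ENNReal.ofReal b * ENNReal.ofReal (c ^ p) := by
  obtain ⟨c', hc', hc'c⟩ := exists_between hc
  obtain ⟨r₀, hr₀, hslope⟩ := exists_abs_sub_le_of_lipUpper_lt hu hc'
  have hNp : 0 < N / p := div_pos hN hp
  -- a global Lipschitz bound already confines the section to a small ball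
  have hsmall : ∀ᶠ lam in atTop, ((K + 1) / lam) ^ (p / N) < r₀ :=
    ((tendsto_div_rpow_atTop_nhdsGT_zero (by positivity) (div_pos hp hN)).mono_right
      nhdsWithin_le_nhds).eventually (gt_mem_nhds hr₀)
  filter_upwards [hsmall, eventually_gt_atTop 0] with lam hlam hlam0
  refine le_trans ?_ (rpow_mul_measure_ball_le hball hN hlam0 ((lipUpper_nonneg hu).trans_lt hc))
  gcongr
  intro y hy
  have hnear : dist x y < r₀ :=
    (dist_lt_of_mem_BVYset hNp hlam0 hy (hu.abs_sub_le x y) (lt_add_one _)).trans hlam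
  rw [mem_ball, dist_comm]
  refine dist_lt_of_mem_BVYset hNp hlam0 hy ?_ hc'c
  rw [abs_sub_comm, dist_comm]
  exact hslope y (by rwa [dist_comm])

lemma rpow_mul_measure_section_le_indicator (hu : LipschitzWith K u)
    (hball : ∀ x r, 0 < r → μ (ball x r) ≤ ENNReal.ofReal b * ENNReal.ofReal (r ^ N))
    (hN : 0 < N) (hp : 0 < p) (hlam : K + 1 ≤ lam) (x : X) :
    ENNReal.ofReal (lam ^ p) * μ (Prod.mk x ⁻¹' BVYset u N p lam) ≤
      (cthickening 1 (Function.support u)).indicator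
        (fun _ => ENNReal.ofReal b * ENNReal.ofReal ((K + 1) ^ p)) x := by
  have hlam0 : 0 < lam := by linarith [K.2]
  have hsub : Prod.mk x ⁻¹' BVYset u N p lam ⊆ ball x (((K + 1) / lam) ^ (p / N)) :=
    fun y hy => by
      rw [mem_ball, dist_comm]
      exact dist_lt_of_mem_BVYset (div_pos hN hp) hlam0 hy (hu.abs_sub_le x y) (lt_add_one _)
  by_cases hx : x ∈ cthickening 1 (Function.support u)
  · rw [indicator_of_mem hx]
    exact (mul_le_mul_right (measure_mono hsub) _).trans
      (rpow_mul_measure_ball_le (hball x) hN hlam0 (by positivity))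
  rw [indicator_of_notMem hx, nonpos_iff_eq_zero, mul_eq_zero]
  refine Or.inr (measure_mono_null (fun y hy => ?_) measure_empty)
  have hxy : dist x y ≤ 1 := by
    refine (dist_comm x y ▸ (mem_ball.1 (hsub hy)).le).trans (Real.rpow_le_one (by positivity)
      ((div_le_one hlam0).2 hlam) (by positivity))
  have hne : u x ≠ u y := fun h => by
    have hpos : 0 < lam * dist x y ^ (N / p + 1) := by
      have := dist_pos.2 hy.1
      positivity
    have := hy.2
    rw [h, sub_self, abs_zero] at this
    linarith
  refine hx ?_
  by_cases hux : u x = 0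
  · exact mem_cthickening_of_dist_le x y 1 _ (hux ▸ hne).symm hxy
  · exact self_subset_cthickening _ hux

lemma limsup_rpow_mul_measure_section_le (hu : LipschitzWith K u)
    (hball : ∀ r, 0 < r → μ (ball x r) ≤ ENNReal.ofReal b * ENNReal.ofReal (r ^ N))
    (hN : 0 < N) (hp : 0 < p) :
    limsup (fun lam => ENNReal.ofReal (lam ^ p) * μ (Prod.mk x ⁻¹' BVYset u N p lam)) atTop ≤
      ENNReal.ofReal b * ENNReal.ofReal (lipUpper u x ^ p) := by
  have hcont : Tendsto (fun c => ENNReal.ofReal b * ENNReal.ofReal (c ^ p))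
      (𝓝[>] (lipUpper u x)) (𝓝 (ENNReal.ofReal b * ENNReal.ofReal (lipUpper u x ^ p))) :=
    ENNReal.Tendsto.const_mul (ENNReal.tendsto_ofReal
      ((Real.continuousAt_rpow_const _ p (Or.inr hp.le)).tendsto.mono_left nhdsWithin_le_nhds))
      (Or.inr ENNReal.ofReal_ne_top)
  refine ge_of_tendsto hcont (eventually_mem_nhdsWithin.mono fun c hc => ?_)
  exact limsup_le_of_le (by isBoundedDefault)
    (eventually_rpow_mul_measure_section_le hu hball hN hp hc)

end SectionMeasure

lemma three_mul_sq_mul_lower_constant_le {a g p N lam ρ : ℝ} (ha : 0 ≤ a) (hg : 0 ≤ g)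
    (hp : 1 ≤ p) (hN : 0 ≤ N) (hρ : 0 < ρ) (hlam : 0 < lam)
    (hlamρ : lam * (4 * ρ) ^ (N / p) = 3 / 8 * g) :
    3 * ((2 : ℝ) ^ N) ^ 2 * (a / ((2 : ℝ) ^ (5 * N) * 8 ^ p) * g ^ p) ≤ lam ^ p * (a * ρ ^ N) := by
  have hp0 : 0 < p := by linarith
  set w : ℝ := (2 : ℝ) ^ N
  have hw : 1 ≤ w := Real.one_le_rpow one_le_two hN
  have h4 : (4 : ℝ) ^ N = w ^ 2 := by
    rw [show (4 : ℝ) = 2 ^ (2 : ℝ) by norm_num, ← Real.rpow_mul zero_le_two, mul_comm,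
      Real.rpow_mul zero_le_two, Real.rpow_two]
  have h32 : (2 : ℝ) ^ (5 * N) = w ^ 5 := by
    rw [mul_comm, Real.rpow_mul zero_le_two, ← Real.rpow_natCast]
    norm_num
    rfl
  have hscale : lam ^ p * ρ ^ N = 3 ^ p * g ^ p / (8 ^ p * w ^ 2) := by
    have : (lam * (4 * ρ) ^ (N / p)) ^ p = (3 / 8 * g) ^ p := by rw [hlamρ]
    rw [Real.mul_rpow hlam.le (by positivity), ← Real.rpow_mul (by positivity),
      div_mul_cancel₀ _ hp0.ne', Real.mul_rpow (by norm_num) hρ.le, h4,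
      Real.mul_rpow (by norm_num) hg, Real.div_rpow (by norm_num) (by norm_num)] at this
    rw [eq_div_iff (by positivity)]
    field_simp at this
    linear_combination this
  have h3 : 3 ≤ (3 : ℝ) ^ p := by
    simpa using Real.rpow_le_rpow_of_exponent_le (by norm_num : (1 : ℝ) ≤ 3) hp
  have hw0 : 0 < w := by positivity
  calc 3 * w ^ 2 * (a / ((2 : ℝ) ^ (5 * N) * 8 ^ p) * g ^ p)
      = a * g ^ p / 8 ^ p * (3 / w ^ 3) := by rw [h32]; field_simp
    _ ≤ a * g ^ p / 8 ^ p * (3 ^ p / w ^ 2) := by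
      refine mul_le_mul_of_nonneg_left ?_ (by positivity)
      rw [div_le_div_iff₀ (by positivity) (by positivity)]
      nlinarith [pow_le_pow_right₀ hw (by norm_num : 2 ≤ 3),
        mul_le_mul_of_nonneg_right h3 (by positivity : (0 : ℝ) ≤ w ^ 3)]
    _ = lam ^ p * (a * ρ ^ N) := by
      rw [mul_left_comm, hscale]
      field_simp

section LowerBound

variable {X : Type*} [MetricSpace X] [MeasurableSpace X] {μ : Measure X} {u : X → ℝ} {K : ℝ≥0}
  {N p a β : ℝ} {x : X}

lemma eventually_mul_rpow_le_measure_ball {c : ℝ≥0∞}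
    (hc : c < liminf (fun r => μ (ball x r) / ENNReal.ofReal (r ^ N)) (𝓝[>] 0)) :
    ∀ᶠ r in 𝓝[>] 0, c * ENNReal.ofReal (r ^ N) ≤ μ (ball x r) := by
  filter_upwards [eventually_lt_of_lt_liminf hc, eventually_mem_nhdsWithin] with r hr (hr0 : 0 < r)
  exact (ENNReal.le_div_iff_mul_le (Or.inl (by simp; positivity)) (Or.inl (by simp))).1 hr.le

lemma IsDoublingWith.ofReal_mul_rpow_le_measure (h : IsDoublingWith μ β) (hβ : 0 < β)
    (ha : 0 ≤ a) {ρ : ℝ} (hρ : 0 < ρ) {S E : Set X} (hS : MeasurableSet S) {y : X}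
    (hy : dist y x < 3 * ρ) (hfin : μ (ball y ρ) ≠ ∞)
    (hdens : μ (closedBall y ρ \ S) ≤ (3 * ENNReal.ofReal β)⁻¹ * μ (closedBall y ρ))
    (hlow : ENNReal.ofReal (a / 2) * ENNReal.ofReal (ρ ^ N) ≤ μ (ball x ρ))
    (hE : ball y ρ ∩ S ⊆ E) :
    ENNReal.ofReal (a * ρ ^ N) ≤ 3 * ENNReal.ofReal β ^ 2 * μ E :=
  calc ENNReal.ofReal (a * ρ ^ N) = 2 * (ENNReal.ofReal (a / 2) * ENNReal.ofReal (ρ ^ N)) := by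
        rw [← ENNReal.ofReal_mul (by positivity), ← ENNReal.ofReal_ofNat 2,
          ← ENNReal.ofReal_mul zero_le_two]
        ring_nf
    _ ≤ 2 * (ENNReal.ofReal β ^ 2 * μ (ball y ρ)) := by
        gcongr 2 * ?_
        exact hlow.trans (h.measure_ball_le_of_dist_lt hρ hy)
    _ = ENNReal.ofReal β ^ 2 * (2 * μ (ball y ρ)) := by ring
    _ ≤ ENNReal.ofReal β ^ 2 * (3 * μ (ball y ρ ∩ S)) := by
        gcongr _ * ?_
        exact h.two_mul_measure_ball_le hβ hS hρ hfin hdens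
    _ ≤ 3 * ENNReal.ofReal β ^ 2 * μ E := by
        rw [mul_left_comm, ← mul_assoc]
        gcongr

lemma lower_constant_mul_le (hβN : (2 : ℝ) ^ N = β) (hp : 1 ≤ p) (hN : 0 ≤ N) (ha : 0 ≤ a)
    {g ρ lam : ℝ} (hg : 0 ≤ g) (hρ : 0 < ρ) (hlam : 0 < lam)
    (hlamρ : lam * (4 * ρ) ^ (N / p) = 3 / 8 * g) {m : ℝ≥0∞}
    (hm : ENNReal.ofReal (a * ρ ^ N) ≤ 3 * ENNReal.ofReal β ^ 2 * m) :
    ENNReal.ofReal (a / (2 ^ (5 * N) * 8 ^ p)) * ENNReal.ofReal (g ^ p) ≤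
      ENNReal.ofReal (lam ^ p) * m := by
  have hβ : 0 < β := hβN ▸ Real.rpow_pos_of_pos two_pos N
  refine (ENNReal.mul_le_mul_iff_right (a := 3 * ENNReal.ofReal β ^ 2) (by simp [hβ])
    (by finiteness)).1 ?_
  calc 3 * ENNReal.ofReal β ^ 2 * (ENNReal.ofReal (a / (2 ^ (5 * N) * 8 ^ p)) *
        ENNReal.ofReal (g ^ p))
      = ENNReal.ofReal (3 * β ^ 2 * (a / (2 ^ (5 * N) * 8 ^ p) * g ^ p)) := by
        rw [ENNReal.ofReal_mul (by positivity), ENNReal.ofReal_mul (by positivity),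
          ENNReal.ofReal_mul (by positivity), ENNReal.ofReal_pow hβ.le, ENNReal.ofReal_ofNat]
    _ ≤ ENNReal.ofReal (lam ^ p * (a * ρ ^ N)) :=
        ENNReal.ofReal_le_ofReal
          (hβN ▸ three_mul_sq_mul_lower_constant_le ha hg hp hN hρ hlam hlamρ)
    _ ≤ ENNReal.ofReal (lam ^ p) * (3 * ENNReal.ofReal β ^ 2 * m) := by
        rw [ENNReal.ofReal_mul (by positivity)]
        gcongr
    _ = 3 * ENNReal.ofReal β ^ 2 * (ENNReal.ofReal (lam ^ p) * m) := by ring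

lemma IsDoublingWith.eventually_lower_constant_mul_le [OpensMeasurableSpace X]
    (h : IsDoublingWith μ β)
    (hβN : (2 : ℝ) ^ N = β) (hN : 0 < N) (hp : 1 ≤ p) (ha : 0 < a) (hu : LipschitzWith K u)
    (hfin : ∀ y r, 0 < r → μ (ball y r) < ∞)
    (hθ : ENNReal.ofReal a ≤ liminf (fun r => μ (ball x r) / ENNReal.ofReal (r ^ N)) (𝓝[>] 0))
    (hlip : lipUpper u x = lipLower u x)
    (hdens : ∀ (q : ℚ) (m : ℕ), x ∈ slopeLeSet u q (1 / (m + 1)) →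
      ∀ᶠ ρ in 𝓝[>] 0, ∀ w, x ∈ closedBall w (3 * ρ) →
        μ (closedBall w ρ \ slopeLeSet u q (1 / (m + 1))) ≤
          (3 * ENNReal.ofReal β)⁻¹ * μ (closedBall w ρ)) :
    ∀ᶠ lam in atTop, ENNReal.ofReal (a / (2 ^ (5 * N) * 8 ^ p)) * ENNReal.ofReal (lipUpper u x ^ p)
      ≤ ENNReal.ofReal (lam ^ p) * μ (Prod.mk x ⁻¹' BVYset u N p lam) := by
  rcases (lipUpper_nonneg (x := x) hu).eq_or_lt with hg | hg
  · rw [← hg, Real.zero_rpow (by linarith)]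
    simp
  set g := lipUpper u x
  obtain ⟨q, hgq, hq⟩ := exists_rat_btwn (show g < 9 / 8 * g by linarith)
  obtain ⟨m, hxS⟩ := exists_nat_mem_slopeLeSet hu hgq
  have hNp : 0 < N / p := div_pos hN (by linarith)
  have hgood : ∀ᶠ ρ : ℝ in 𝓝[>] 0, ρ < 1 / (m + 1) ∧
      (∃ y ∈ ball x (3 * ρ), 7 / 8 * g * (3 * ρ) < |u y - u x|) ∧
      (∀ w, x ∈ closedBall w (3 * ρ) → μ (closedBall w ρ \ slopeLeSet u q (1 / (m + 1))) ≤
          (3 * ENNReal.ofReal β)⁻¹ * μ (closedBall w ρ)) ∧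
      ENNReal.ofReal (a / 2) * ENNReal.ofReal (ρ ^ N) ≤ μ (ball x ρ) :=
    ((gt_mem_nhds (by positivity)).filter_mono nhdsWithin_le_nhds).and <|
      (eventually_nhdsGT_zero_mul_left three_pos
        (eventually_exists_lt_abs_sub_of_lt_lipLower (by positivity)
          (by rw [← hlip]; linarith : 7 / 8 * g < lipLower u x))).and <|
      (hdens q m hxS).and (eventually_mul_rpow_le_measure_ball
        (hθ.trans_lt' ((ENNReal.ofReal_lt_ofReal_iff ha).2 (by linarith : a / 2 < a))))
  filter_upwards [eventually_atTop_exists_mul_rpow_eq (by positivity : 0 < 3 / 8 * g) hNp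
      (eventually_nhdsGT_zero_mul_left (by norm_num : (0 : ℝ) < 1 / 4) hgood),
    eventually_gt_atTop 0] with lam ⟨R, hR, hlamR, hρδ, ⟨y, hy, hincr⟩, hdensy, hlow⟩ hlam
  set ρ := 1 / 4 * R
  rw [show R = 4 * ρ by ring] at hlamR
  rw [mem_ball] at hy
  have hρ : 0 < ρ := by positivity
  refine lower_constant_mul_le hβN hp hN.le ha.le hg.le hρ hlam hlamR ?_
  exact h.ofReal_mul_rpow_le_measure (hβN ▸ Real.rpow_pos_of_pos two_pos N) ha.le hρ
    (isClosed_slopeLeSet hu.continuous _ _).measurableSet hy (hfin y ρ hρ).ne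
    (hdensy y (by rw [mem_closedBall, dist_comm]; exact hy.le)) hlow
    (ball_inter_slopeLeSet_subset_section hNp.le hlam.le (hg.trans hgq).le hq.le hρδ.le hy hincr
      hlamR.le)

end LowerBound

lemma limsup_lintegral_le_of_eventually_le {α ι : Type*} [MeasurableSpace α] {μ : Measure α}
    {l : Filter ι} [l.IsCountablyGenerated] {f : ι → α → ℝ≥0∞} (g : α → ℝ≥0∞)
    (hf : ∀ i, Measurable (f i)) (h_bound : ∀ᶠ i in l, f i ≤ᵐ[μ] g) (h_fin : ∫⁻ a, g a ∂μ ≠ ∞) :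
    limsup (fun i => ∫⁻ a, f i a ∂μ) l ≤ ∫⁻ a, limsup (fun i => f i a) l ∂μ := by
  rcases l.eq_or_neBot with rfl | hl
  · simp
  obtain ⟨φ, hlim, hφ⟩ := exists_seq_tendsto_limsup (f := l) (u := fun i => ∫⁻ a, f i a ∂μ)
  obtain ⟨n₀, hn₀⟩ := eventually_atTop.1 (hφ.eventually h_bound)
  have hshift : Tendsto (fun n => n + n₀) atTop atTop := tendsto_add_atTop_nat n₀
  calc limsup (fun i => ∫⁻ a, f i a ∂μ) l
      = limsup (fun n => ∫⁻ a, f (φ (n + n₀)) a ∂μ) atTop := ((hlim.comp hshift).limsup_eq).symm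
    _ ≤ ∫⁻ a, limsup (fun n => f (φ (n + n₀)) a) atTop ∂μ :=
        limsup_lintegral_le g (fun _ => hf _) (fun n => hn₀ _ (by omega)) h_fin
    _ ≤ ∫⁻ a, limsup (fun i => f i a) l ∂μ :=
        lintegral_mono fun a => (hφ.comp hshift).limsup_comp_le_limsup (u := fun i => f i a)

section Integration

variable {X : Type*} [MetricSpace X] [SecondCountableTopology X] [MeasurableSpace X] [BorelSpace X]
  {μ : Measure X} [SFinite μ] {u : X → ℝ} {K : ℝ≥0} {N p b : ℝ}

lemma measurableSet_BVYset (hu : Continuous u) (hNp : 0 < N / p + 1) (lam : ℝ) :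
    MeasurableSet (BVYset u N p lam) := by
  have hrpow : Continuous fun t : ℝ => t ^ (N / p + 1) :=
    continuous_id.rpow_const fun _ => Or.inr hNp.le
  exact (isOpen_ne_fun continuous_fst continuous_snd).measurableSet.inter
    (isClosed_le (continuous_const.mul (hrpow.comp continuous_dist))
      (by fun_prop : Continuous fun q : X × X => |u q.1 - u q.2|)).measurableSet

lemma measurable_measure_section (hu : Continuous u) (hNp : 0 < N / p + 1) (lam : ℝ) :
    Measurable fun x => μ (Prod.mk x ⁻¹' BVYset u N p lam) :=
  measurable_measure_prodMk_left (measurableSet_BVYset hu hNp lam)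

lemma rpow_mul_measure_BVYset_eq_lintegral (hu : Continuous u) (hNp : 0 < N / p + 1) (lam : ℝ) :
    ENNReal.ofReal (lam ^ p) * (μ.prod μ) (BVYset u N p lam) =
      ∫⁻ x, ENNReal.ofReal (lam ^ p) * μ (Prod.mk x ⁻¹' BVYset u N p lam) ∂μ := by
  rw [Measure.prod_apply (measurableSet_BVYset hu hNp lam),
    lintegral_const_mul' _ _ ENNReal.ofReal_ne_top]

lemma limsup_rpow_mul_measure_BVYset_le (hu : LipschitzWith K u)
    (hsupp : Bornology.IsBounded (Function.support u))
    (hball : ∀ x r, 0 < r → μ (ball x r) ≤ ENNReal.ofReal b * ENNReal.ofReal (r ^ N))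
    (hN : 0 < N) (hp : 0 < p) :
    limsup (fun lam => ENNReal.ofReal (lam ^ p) * (μ.prod μ) (BVYset u N p lam)) atTop ≤
      ENNReal.ofReal b * ∫⁻ x, ENNReal.ofReal (lipUpper u x ^ p) ∂μ := by
  have hNp : 0 < N / p + 1 := by positivity
  have hsupp_fin : μ (cthickening 1 (Function.support u)) ≠ ∞ :=
    (measure_lt_top_of_isBounded (fun x r hr => (hball x r hr).trans_lt (by finiteness))
      hsupp.cthickening).ne
  simp_rw [rpow_mul_measure_BVYset_eq_lintegral hu.continuous hNp]
  calc limsup (fun lam => ∫⁻ x, ENNReal.ofReal (lam ^ p) * μ (Prod.mk x ⁻¹' BVYset u N p lam) ∂μ)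
        atTop
      ≤ ∫⁻ x, limsup (fun lam => ENNReal.ofReal (lam ^ p) * μ (Prod.mk x ⁻¹' BVYset u N p lam))
          atTop ∂μ := by
        refine limsup_lintegral_le_of_eventually_le _
          (fun lam => (measurable_measure_section hu.continuous hNp lam).const_mul _)
          ((eventually_ge_atTop (K + 1 : ℝ)).mono fun lam hlam => ae_of_all _
            (rpow_mul_measure_section_le_indicator hu hball hN hp hlam)) ?_
        rw [lintegral_indicator_const isClosed_cthickening.measurableSet]
        finiteness
    _ ≤ ∫⁻ x, ENNReal.ofReal b * ENNReal.ofReal (lipUpper u x ^ p) ∂μ :=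
        lintegral_mono fun x => limsup_rpow_mul_measure_section_le hu (hball x) hN hp
    _ = ENNReal.ofReal b * ∫⁻ x, ENNReal.ofReal (lipUpper u x ^ p) ∂μ :=
        lintegral_const_mul' _ _ ENNReal.ofReal_ne_top

lemma IsDoublingWith.le_liminf_rpow_mul_measure_BVYset [IsLocallyFiniteMeasure μ] {β a : ℝ}
    (h : IsDoublingWith μ β) (hβN : (2 : ℝ) ^ N = β) (hN : 0 < N) (hp : 1 ≤ p) (ha : 0 < a)
    (hu : LipschitzWith K u)
    (hball : ∀ x r, 0 < r → μ (ball x r) ≤ ENNReal.ofReal b * ENNReal.ofReal (r ^ N))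
    (hθ : ∀ x, ENNReal.ofReal a ≤
      liminf (fun r => μ (ball x r) / ENNReal.ofReal (r ^ N)) (𝓝[>] 0))
    (hae : ∀ᵐ x ∂μ, lipUpper u x = lipLower u x) :
    ENNReal.ofReal (a / (2 ^ (5 * N) * 8 ^ p)) * ∫⁻ x, ENNReal.ofReal (lipUpper u x ^ p) ∂μ ≤
      liminf (fun lam => ENNReal.ofReal (lam ^ p) * (μ.prod μ) (BVYset u N p lam)) atTop := by
  have hβ : 0 < β := hβN ▸ Real.rpow_pos_of_pos two_pos N
  have hNp : 0 < N / p + 1 := by have := div_pos hN (by linarith : (0 : ℝ) < p); positivity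
  have := h.isUnifLocDoublingMeasure
  have hdens : ∀ᵐ x ∂μ, ∀ (q : ℚ) (m : ℕ), x ∈ slopeLeSet u q (1 / (m + 1)) →
      ∀ᶠ ρ in 𝓝[>] 0, ∀ w, x ∈ closedBall w (3 * ρ) →
        μ (closedBall w ρ \ slopeLeSet u q (1 / (m + 1))) ≤
          (3 * ENNReal.ofReal β)⁻¹ * μ (closedBall w ρ) :=
    ae_all_iff.2 fun q => ae_all_iff.2 fun m =>
      IsUnifLocDoublingMeasure.ae_eventually_measure_closedBall_diff_le μ
        (isClosed_slopeLeSet hu.continuous _ _).measurableSet 3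
        (ENNReal.inv_pos.2 (by finiteness)) (ENNReal.inv_ne_top.2 (by simp [hβ]))
  simp_rw [rpow_mul_measure_BVYset_eq_lintegral hu.continuous hNp]
  rw [← lintegral_const_mul' _ _ ENNReal.ofReal_ne_top]
  refine (lintegral_mono_ae ?_).trans
    (lintegral_liminf_le fun lam => (measurable_measure_section hu.continuous hNp lam).const_mul _)
  filter_upwards [hae, hdens] with x hlip hdensx
  exact le_liminf_of_le (by isBoundedDefault)
    (h.eventually_lower_constant_mul_le hβN hN hp ha hu
      (fun y r hr => (hball y r hr).trans_lt (by finiteness)) (hθ x) hlip hdensx)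

end Integration

theorem two_sided_estimate_of_lip_eq_Lip_general
    {X : Type*} [MetricSpace X] [TopologicalSpace.SeparableSpace X]
    [MeasurableSpace X] [BorelSpace X]
    (μ : Measure X) [SigmaFinite μ] [IsLocallyFiniteMeasure μ]
    (p β : ℝ) (hp : 1 ≤ p) (hβ : 1 < β)
    (hdbl : ∀ (x : X) (r : ℝ), 0 < r →
      μ (Metric.ball x (2 * r)) ≤ ENNReal.ofReal β * μ (Metric.ball x r))
    (N : ℝ) (hN : N = Real.log β / Real.log 2)
    (a b : ℝ) (ha : 0 < a) (hab : a < b)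
    (hθlow : ∀ x : X,
      ENNReal.ofReal a ≤
        Filter.liminf (fun r : ℝ => μ (Metric.ball x r) / ENNReal.ofReal (r ^ N)) (𝓝[>] (0 : ℝ)))
    (hθup : ∀ x : X,
      Filter.limsup (fun r : ℝ => μ (Metric.ball x r) / ENNReal.ofReal (r ^ N)) (𝓝[>] (0 : ℝ))
        ≤ ENNReal.ofReal b)
    (u : X → ℝ) (hu : ∃ L : NNReal, LipschitzWith L u)
    (hsupp : Bornology.IsBounded (Function.support u))
    (hae : ∀ᵐ x ∂μ, lipUpper u x = lipLower u x) :
    ENNReal.ofReal (a / ((2 : ℝ) ^ (5 * N) * (8 : ℝ) ^ p)) *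
        (∫⁻ x, ENNReal.ofReal (lipUpper u x ^ p) ∂μ)
      ≤ Filter.liminf
          (fun lam : ℝ => ENNReal.ofReal (lam ^ p) * (μ.prod μ) (BVYset u N p lam))
          Filter.atTop
    ∧ Filter.limsup
          (fun lam : ℝ => ENNReal.ofReal (lam ^ p) * (μ.prod μ) (BVYset u N p lam))
          Filter.atTop
        ≤ ENNReal.ofReal (2 * b) * ∫⁻ x, ENNReal.ofReal (lipUpper u x ^ p) ∂μ := by
  obtain ⟨K, hK⟩ := hu
  have hβN : (2 : ℝ) ^ N = β := two_rpow_eq_of_eq_log_div_log (by linarith) hN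
  have hN0 : 0 < N := hN ▸ div_pos (Real.log_pos hβ) (Real.log_pos one_lt_two)
  have hball : ∀ x r, 0 < r → μ (ball x r) ≤ ENNReal.ofReal b * ENNReal.ofReal (r ^ N) :=
    fun x r hr => IsDoublingWith.measure_ball_le hdbl hβN (hθup x) hr
  refine ⟨IsDoublingWith.le_liminf_rpow_mul_measure_BVYset hdbl hβN hN0 hp ha hK hball hθlow hae,
    (limsup_rpow_mul_measure_BVYset_le hK hsupp hball hN0 (by linarith)).trans ?_⟩
  gcongr
  linarith

theorem two_sided_estimate_of_lip_eq_Lip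
    {X : Type*} [MetricSpace X] [CompleteSpace X] [TopologicalSpace.SeparableSpace X]
    [MeasurableSpace X] [BorelSpace X]
    (μ : Measure X) [SigmaFinite μ] [IsLocallyFiniteMeasure μ] [μ.InnerRegular]
    [μ.IsOpenPosMeasure]
    (p β : ℝ) (hp : 1 ≤ p) (hβ : 1 < β)
    (hdbl : ∀ (x : X) (r : ℝ), 0 < r →
      μ (Metric.ball x (2 * r)) ≤ ENNReal.ofReal β * μ (Metric.ball x r))
    (N : ℝ) (hN : N = Real.log β / Real.log 2)
    (a b : ℝ) (ha : 0 < a) (hab : a < b)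
    (hθlow : ∀ x : X,
      ENNReal.ofReal a ≤
        Filter.liminf (fun r : ℝ => μ (Metric.ball x r) / ENNReal.ofReal (r ^ N)) (𝓝[>] (0 : ℝ)))
    (hθup : ∀ x : X,
      Filter.limsup (fun r : ℝ => μ (Metric.ball x r) / ENNReal.ofReal (r ^ N)) (𝓝[>] (0 : ℝ))
        ≤ ENNReal.ofReal b)
    (u : X → ℝ) (hu : ∃ L : NNReal, LipschitzWith L u)
    (hsupp : Bornology.IsBounded (Function.support u))
    (hae : ∀ᵐ x ∂μ, lipUpper u x = lipLower u x) :
    ENNReal.ofReal (a / ((2 : ℝ) ^ (5 * N) * (8 : ℝ) ^ p)) *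
        (∫⁻ x, ENNReal.ofReal (lipUpper u x ^ p) ∂μ)
      ≤ Filter.liminf
          (fun lam : ℝ => ENNReal.ofReal (lam ^ p) * (μ.prod μ) (BVYset u N p lam))
          Filter.atTop
    ∧ Filter.limsup
          (fun lam : ℝ => ENNReal.ofReal (lam ^ p) * (μ.prod μ) (BVYset u N p lam))
          Filter.atTop
        ≤ ENNReal.ofReal (2 * b) * ∫⁻ x, ENNReal.ofReal (lipUpper u x ^ p) ∂μ :=
  two_sided_estimate_of_lip_eq_Lip_general μ p β hp hβ hdbl N hN a b ha hab hθlow hθup u hu hsupp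
    hae
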